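/- Fix p ≥ 1, λ > 0, α ≥ 0, γ ∈ (0, 1], positive integers n and K, a vector η* ∈ ℝ^p, and for each t = 1, …, n a finite candidate set E_t with |E_t| ≥ K, a vector η̂_t ∈ ℝ^p, and a map ζ assigning to each nonempty ordered list A of distinct elements of E_t a vector ζ_A ∈ ℝ^p with ‖ζ_A‖_2 ≤ 1. Let A_t = (a_1^t, …, a_K^t) be the K-element ordered list chosen at step t, and define Φ_t = λ I_p + Σ_{i=1}^{t−1} Σ_{k=1}^{K} ζ_{A_i^k} ζ_{A_i^k}^T. For each t and each list A define w̄(A) = η*^T ζ_A, U_t(A) = clamp_{[0,1]}( η̂_t^T ζ_A + α √(ζ_A^T Φ_t^{−1} ζ_A) ), L_t(A) = clamp_{[0,1]}( η̂_t^T ζ_A − α √(ζ_A^T Φ_t^{−1} ζ_A) ), and f(A, g) = Σ_{k=1}^{|A|} g(A^k). Assume that for every t: (i) L_t(A) ≤ w̄(A) ≤ U_t(A) for every nonempty ordered list A of distinct elements of E_t, and (ii) f(A_t, U_t) ≥ γ · max over all K-element ordered lists B of distinct elements of E_t of f(B, U_t). Let A*_t maximize f(·, w̄) over K-element ordered lists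 of distinct elements of E_t. Then Σ_{t=1}^{n} [ f(A*_t, w̄) − f(A_t, w̄)/γ ] ≤ (2αK/γ) · √( n · p · log(1 + nK/(p·λ)) / ( λ · log(1 + 1/λ) ) ). -/

import Mathlib

/-!
On the good event the optimistic index `U` dominates `w̄` and the pessimistic index `L` is
dominated by it, so in round `t`
`γ f(A*_t, w̄) ≤ γ f(A*_t, U_t) ≤ f(A_t, U_t)` and `f(A_t, w̄) ≥ f(A_t, L_t)`; hence the scaled
regret of the round is at most `(1/γ) ∑_k (U_t - L_t)(A_t^k) ≤ (2α/γ) ∑_k √(ζᵀ Φ_t⁻¹ ζ)`.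

The widths are controlled by the elliptical potential argument. By the matrix determinant lemma
each `x = ζᵀ Φ_t⁻¹ ζ` of round `t` satisfies `log (1 + x) ≤ log det Φ_{t+1} - log det Φ_t`, so
the sum telescopes to at most `K (log det Φ_n - p log λ) ≤ K p log (1 + nK/(pλ))`, using AM-GM on
the eigenvalues and `tr Φ_n ≤ pλ + nK`. Since `x ≤ 1/λ`, concavity gives
`x ≤ log (1 + x) / (λ log (1 + 1/λ))`, and Cauchy-Schwarz over the `nK` terms finishes.
-/

open Matrix Finset

namespace Matrix

variable {m : Type*} [Fintype m]

theorem posSemidef_vecMulVec_self (v : m → ℝ) : (vecMulVec v v).PosSemidef := by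
  simpa using posSemidef_vecMulVec_self_star v

variable [DecidableEq m]

theorem det_add_vecMulVec_self {M : Matrix m m ℝ} (hM : M.PosDef) (v : m → ℝ) :
    (M + vecMulVec v v).det = M.det * (1 + v ⬝ᵥ M⁻¹ *ᵥ v) := by
  rw [vecMulVec_eq Unit, det_add_replicateCol_mul_replicateRow hM.det_pos.ne'.isUnit,
    ← replicateRow_vecMul, det_unique (n := Unit)]
  simp [dotProduct_mulVec]

theorem PosDef.det_le_det_add_sum_vecMulVec_self {κ : Type*} {M : Matrix m m ℝ} (hM : M.PosDef)
    (s : Finset κ) (u : κ → m → ℝ) :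
    M.det ≤ (M + ∑ i ∈ s, vecMulVec (u i) (u i)).det := by
  classical
  induction s using Finset.induction_on generalizing M with
  | empty => simp
  | insert a s ha ih =>
    rw [sum_insert ha, ← add_assoc]
    refine le_trans ?_ (ih (hM.add_posSemidef (posSemidef_vecMulVec_self (u a))))
    rw [det_add_vecMulVec_self hM]
    have hq : 0 ≤ u a ⬝ᵥ M⁻¹ *ᵥ u a := by
      simpa using hM.posSemidef.inv.dotProduct_mulVec_nonneg (u a)
    nlinarith [hM.det_pos]

theorem PosDef.det_mul_one_add_le_det_add_sum_vecMulVec_self {κ : Type*} {M : Matrix m m ℝ}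
    (hM : M.PosDef) {s : Finset κ} (u : κ → m → ℝ) {k : κ} (hk : k ∈ s) :
    M.det * (1 + u k ⬝ᵥ M⁻¹ *ᵥ u k) ≤ (M + ∑ i ∈ s, vecMulVec (u i) (u i)).det := by
  classical
  rw [← add_sum_erase s _ hk, ← add_assoc, ← det_add_vecMulVec_self hM]
  exact (hM.add_posSemidef (posSemidef_vecMulVec_self (u k))).det_le_det_add_sum_vecMulVec_self _ u

theorem PosDef.log_det_le [Nonempty m] {M : Matrix m m ℝ} (hM : M.PosDef) :
    Real.log M.det ≤ Fintype.card m * Real.log (M.trace / Fintype.card m) := by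
  have hcard : (0 : ℝ) < Fintype.card m := by exact_mod_cast Fintype.card_pos
  have hjensen := strictConcaveOn_log_Ioi.concaveOn.le_map_sum (t := univ)
    (w := fun _ => (Fintype.card m : ℝ)⁻¹) (p := hM.isHermitian.eigenvalues)
    (fun _ _ => by positivity) (by simp [hcard.ne'])
    (fun i _ => Set.mem_Ioi.mpr (hM.eigenvalues_pos i))
  simp only [smul_eq_mul, inv_mul_eq_div, ← sum_div] at hjensen
  rw [hM.isHermitian.det_eq_prod_eigenvalues, hM.isHermitian.trace_eq_sum_eigenvalues]
  simp only [RCLike.ofReal_real_eq_id, id]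
  rw [Real.log_prod fun i _ => (hM.eigenvalues_pos i).ne', ← div_le_iff₀' hcard]
  exact hjensen

theorem PosSemidef.dotProduct_inv_smul_one_add_mulVec_le {S : Matrix m m ℝ} (hS : S.PosSemidef)
    {lam : ℝ} (hlam : 0 < lam) (v : m → ℝ) :
    v ⬝ᵥ (lam • 1 + S)⁻¹ *ᵥ v ≤ (v ⬝ᵥ v) / lam := by
  set M := lam • 1 + S
  have hM : M.PosDef := (PosDef.one.smul hlam).add_posSemidef hS
  set y := M⁻¹ *ᵥ v
  have hMy : M *ᵥ y = v := by
    rw [mulVec_mulVec, mul_nonsing_inv _ hM.det_pos.ne'.isUnit, one_mulVec]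
  have hq : 0 ≤ v ⬝ᵥ y := by simpa using hM.posSemidef.inv.dotProduct_mulVec_nonneg v
  -- `M ≥ lam • 1` gives `lam ‖y‖² ≤ yᵀ M y = vᵀ y`; Cauchy–Schwarz gives `(vᵀ y)² ≤ ‖v‖² ‖y‖²`.
  have hlower : lam * (y ⬝ᵥ y) ≤ v ⬝ᵥ y := by
    have hSy : 0 ≤ y ⬝ᵥ S *ᵥ y := by simpa using hS.dotProduct_mulVec_nonneg y
    have hexp : y ⬝ᵥ M *ᵥ y = lam * (y ⬝ᵥ y) + y ⬝ᵥ S *ᵥ y := by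
      simp only [M, add_mulVec, smul_mulVec, one_mulVec, dotProduct_add, dotProduct_smul,
        smul_eq_mul]
    rw [hMy, dotProduct_comm] at hexp
    linarith
  have hcs : (v ⬝ᵥ y) ^ 2 ≤ (v ⬝ᵥ v) * (y ⬝ᵥ y) := by
    simpa only [dotProduct, sq] using sum_mul_sq_le_sq_mul_sq univ v y
  have hvv : 0 ≤ v ⬝ᵥ v := by simpa using dotProduct_star_self_nonneg v
  rw [le_div_iff₀ hlam]
  rcases hq.eq_or_lt with h | h
  · rw [← h, zero_mul]; exact hvv
  · refine le_of_mul_le_mul_left ?_ h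
    nlinarith [mul_le_mul_of_nonneg_left hlower hvv]

end Matrix

theorem Real.mul_log_one_add_le_mul_log_one_add {x c : ℝ} (hx : 0 ≤ x) (hxc : x ≤ c) :
    x * Real.log (1 + c) ≤ c * Real.log (1 + x) := by
  rcases (hx.trans hxc).eq_or_lt with rfl | hc
  · simp [le_antisymm hxc hx]
  -- `1 + x` is the convex combination `(1 - x/c) • 1 + (x/c) • (1 + c)`.
  have hconc := strictConcaveOn_log_Ioi.concaveOn.2 (Set.mem_Ioi.mpr one_pos)
    (Set.mem_Ioi.mpr (by linarith : (0 : ℝ) < 1 + c))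
    (sub_nonneg.mpr (div_le_one_of_le₀ hxc hc.le)) (div_nonneg hx hc.le) (by ring)
  have hpt : (1 - x / c) • (1 : ℝ) + (x / c) • (1 + c) = 1 + x := by
    simp only [smul_eq_mul]; field_simp; ring
  rw [hpt, smul_eq_mul, smul_eq_mul, Real.log_one, mul_zero, zero_add, div_mul_eq_mul_div,
    div_le_iff₀' hc] at hconc
  exact hconc

theorem clamp_add_sub_clamp_sub_le (c : ℝ) {r : ℝ} (hr : 0 ≤ r) :
    max 0 (min 1 (c + r)) - max 0 (min 1 (c - r)) ≤ 2 * r := by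
  simp only [max_def, min_def]
  split_ifs <;> linarith

theorem sub_div_le_of_le_of_mul_le {γ w₁ u₁ w₂ u₂ l₂ : ℝ} (hγ : 0 < γ) (h₁ : w₁ ≤ u₁)
    (happrox : γ * u₁ ≤ u₂) (h₂ : l₂ ≤ w₂) :
    w₁ - w₂ / γ ≤ (u₂ - l₂) / γ := by
  rw [le_div_iff₀ hγ, sub_mul, div_mul_cancel₀ _ hγ.ne']
  nlinarith

theorem List.take_ne_nil_nodup_forall_mem {ι : Type*} {P : ι → Prop} {B : List ι}
    (hB : B.Nodup) (hP : ∀ x ∈ B, P x) {k : ℕ} (hk : k ∈ Icc 1 B.length) :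
    B.take k ≠ [] ∧ (B.take k).Nodup ∧ ∀ x ∈ B.take k, P x := by
  rw [mem_Icc] at hk
  exact ⟨List.ne_nil_of_length_pos (by rw [List.length_take]; omega),
    hB.sublist (List.take_sublist k B), fun x hx => hP x (List.mem_of_mem_take hx)⟩

theorem sum_take_le_sum_take {ι : Type*} {P : ι → Prop} {g₁ g₂ : List ι → ℝ} {B : List ι}
    (hB : B.Nodup) (hP : ∀ x ∈ B, P x)
    (hg : ∀ C : List ι, C ≠ [] → C.Nodup → (∀ x ∈ C, P x) → g₁ C ≤ g₂ C) :
    ∑ k ∈ Icc 1 B.length, g₁ (B.take k) ≤ ∑ k ∈ Icc 1 B.length, g₂ (B.take k) :=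
  sum_le_sum fun _ hk =>
    let ⟨hne, hnd, hmem⟩ := List.take_ne_nil_nodup_forall_mem hB hP hk
    hg _ hne hnd hmem

section DesignMatrix

variable {m κ : Type*} [DecidableEq m] {n : ℕ}

def designMatrix (lam : ℝ) (s : Finset κ) (v : Fin n → κ → m → ℝ) (t : ℕ) : Matrix m m ℝ :=
  lam • 1 + ∑ i ∈ univ.filter (fun i : Fin n => (i : ℕ) < t), ∑ k ∈ s, vecMulVec (v i k) (v i k)

variable {lam : ℝ} (s : Finset κ) (v : Fin n → κ → m → ℝ)

theorem designMatrix_zero : designMatrix lam s v 0 = lam • 1 := by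
  simp [designMatrix]

theorem designMatrix_succ (t : Fin n) :
    designMatrix lam s v (t + 1)
      = designMatrix lam s v t + ∑ k ∈ s, vecMulVec (v t k) (v t k) := by
  have hfilter : univ.filter (fun i : Fin n => (i : ℕ) < t + 1)
      = insert t (univ.filter fun i : Fin n => (i : ℕ) < t) := by
    ext i
    simp only [mem_filter, mem_univ, true_and, mem_insert, Fin.ext_iff]
    omega
  rw [designMatrix, designMatrix, hfilter, sum_insert (by simp), add_comm (∑ k ∈ s, _), add_assoc]

variable [Fintype m]

theorem designMatrix_posDef (hlam : 0 < lam) (t : ℕ) : (designMatrix lam s v t).PosDef :=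
  (PosDef.one.smul hlam).add_posSemidef <| posSemidef_sum _ fun _ _ =>
    posSemidef_sum _ fun _ _ => posSemidef_vecMulVec_self _

theorem trace_designMatrix_le (hv : ∀ i, ∀ k ∈ s, v i k ⬝ᵥ v i k ≤ 1) :
    (designMatrix lam s v n).trace ≤ lam * Fintype.card m + n * #s := by
  have hround : ∀ i, (∑ k ∈ s, vecMulVec (v i k) (v i k)).trace ≤ #s := fun i => by
    simpa [trace_sum, trace_vecMulVec] using sum_le_card_nsmul s _ 1 (hv i)
  rw [designMatrix, filter_true_of_mem fun i _ => i.isLt, trace_add, trace_smul, trace_one,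
    smul_eq_mul, trace_sum]
  simpa using sum_le_card_nsmul univ _ _ fun i _ => hround i

theorem quadForm_inv_designMatrix_nonneg (hlam : 0 < lam) (t : Fin n) (k : κ) :
    0 ≤ v t k ⬝ᵥ (designMatrix lam s v t)⁻¹ *ᵥ v t k := by
  simpa using (designMatrix_posDef s v hlam t).posSemidef.inv.dotProduct_mulVec_nonneg (v t k)

theorem quadForm_inv_designMatrix_le (hlam : 0 < lam) (t : Fin n) (k : κ)
    (hv : v t k ⬝ᵥ v t k ≤ 1) :
    v t k ⬝ᵥ (designMatrix lam s v t)⁻¹ *ᵥ v t k ≤ 1 / lam := by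
  have hS := posSemidef_sum (univ.filter fun i : Fin n => (i : ℕ) < t) fun i _ =>
    posSemidef_sum s fun k _ => posSemidef_vecMulVec_self (v i k)
  exact (hS.dotProduct_inv_smul_one_add_mulVec_le hlam (v t k)).trans (by gcongr)

theorem log_one_add_quadForm_le (hlam : 0 < lam) (t : Fin n) {k : κ} (hk : k ∈ s) :
    Real.log (1 + v t k ⬝ᵥ (designMatrix lam s v t)⁻¹ *ᵥ v t k)
      ≤ Real.log (designMatrix lam s v (t + 1)).det - Real.log (designMatrix lam s v t).det := by
  have hM := designMatrix_posDef s v hlam t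
  have hx := quadForm_inv_designMatrix_nonneg s v hlam t k
  have hgrowth := hM.det_mul_one_add_le_det_add_sum_vecMulVec_self (v t) hk
  rw [← designMatrix_succ] at hgrowth
  rw [le_sub_iff_add_le', ← Real.log_mul hM.det_pos.ne' (by positivity)]
  exact Real.log_le_log (by have := hM.det_pos; positivity) hgrowth

variable [Nonempty m]

theorem sum_log_one_add_quadForm_le (hlam : 0 < lam)
    (hv : ∀ i, ∀ k ∈ s, v i k ⬝ᵥ v i k ≤ 1) :
    ∑ t, ∑ k ∈ s, Real.log (1 + v t k ⬝ᵥ (designMatrix lam s v t)⁻¹ *ᵥ v t k)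
      ≤ #s * (Fintype.card m * Real.log (1 + n * #s / (Fintype.card m * lam))) := by
  set logDet : ℕ → ℝ := fun t => Real.log (designMatrix lam s v t).det
  have hp : (0 : ℝ) < Fintype.card m := by exact_mod_cast Fintype.card_pos
  have htelescope : ∑ t : Fin n, (logDet (t + 1) - logDet t) = logDet n - logDet 0 := by
    rw [Fin.sum_univ_eq_sum_range (fun t => logDet (t + 1) - logDet t), sum_range_sub]
  have hlogDet_zero : logDet 0 = Fintype.card m * Real.log lam := by
    simp [logDet, designMatrix_zero, Real.log_pow]
  have hlogDet_le : logDet n ≤ Fintype.card m * Real.log (lam + n * #s / Fintype.card m) := by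
    refine (designMatrix_posDef s v hlam n).log_det_le.trans ?_
    gcongr
    · exact div_pos (designMatrix_posDef s v hlam n).trace_pos hp
    · rw [add_div' _ _ _ hp.ne', div_le_div_iff_of_pos_right hp]
      exact trace_designMatrix_le s v hv
  have hgain : logDet n - logDet 0
      ≤ Fintype.card m * Real.log (1 + n * #s / (Fintype.card m * lam)) := calc
    _ ≤ Fintype.card m * Real.log (lam + n * #s / Fintype.card m)
          - Fintype.card m * Real.log lam := by rw [hlogDet_zero]; linarith
    _ = _ := by
      rw [← mul_sub, ← Real.log_div (by positivity) hlam.ne']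
      congr 2
      field_simp
  calc ∑ t, ∑ k ∈ s, Real.log (1 + v t k ⬝ᵥ (designMatrix lam s v t)⁻¹ *ᵥ v t k)
      ≤ ∑ t : Fin n, #s * (logDet (t + 1) - logDet t) := by
        refine sum_le_sum fun t _ => ?_
        simpa using sum_le_card_nsmul s _ _ fun k hk => log_one_add_quadForm_le s v hlam t hk
    _ ≤ _ := by rw [← mul_sum, htelescope]; gcongr

theorem sum_quadForm_inv_designMatrix_le (hlam : 0 < lam)
    (hv : ∀ i, ∀ k ∈ s, v i k ⬝ᵥ v i k ≤ 1) :
    ∑ t, ∑ k ∈ s, v t k ⬝ᵥ (designMatrix lam s v t)⁻¹ *ᵥ v t k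
      ≤ #s * (Fintype.card m * Real.log (1 + n * #s / (Fintype.card m * lam)))
        / (lam * Real.log (1 + 1 / lam)) := by
  have hL : 0 < lam * Real.log (1 + 1 / lam) :=
    mul_pos hlam (Real.log_pos (by simp [hlam]))
  rw [le_div_iff₀ hL, sum_mul]
  refine le_trans (sum_le_sum fun t _ => ?_) (sum_log_one_add_quadForm_le s v hlam hv)
  rw [sum_mul]
  refine sum_le_sum fun k hk => ?_
  -- On `[0, 1/lam]` the concave function `log (1 + x)` lies above its chord.
  have hchord := Real.mul_log_one_add_le_mul_log_one_add
    (quadForm_inv_designMatrix_nonneg s v hlam t k)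
    (quadForm_inv_designMatrix_le s v hlam t k (hv t k hk))
  rw [one_div_mul_eq_div, le_div_iff₀ hlam] at hchord
  linarith

theorem sum_sqrt_quadForm_inv_designMatrix_le (hlam : 0 < lam)
    (hv : ∀ i, ∀ k ∈ s, v i k ⬝ᵥ v i k ≤ 1) :
    ∑ t, ∑ k ∈ s, √(v t k ⬝ᵥ (designMatrix lam s v t)⁻¹ *ᵥ v t k)
      ≤ #s * √(n * Fintype.card m * Real.log (1 + n * #s / (Fintype.card m * lam))
        / (lam * Real.log (1 + 1 / lam))) := by
  set x : Fin n × κ → ℝ := fun q => v q.1 q.2 ⬝ᵥ (designMatrix lam s v q.1)⁻¹ *ᵥ v q.1 q.2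
  have hcs := Real.sum_sqrt_mul_sqrt_le (univ ×ˢ s) (f := fun _ => 1) (g := x)
    (fun _ => zero_le_one) fun q => quadForm_inv_designMatrix_nonneg s v hlam q.1 q.2
  simp only [Real.sqrt_one, one_mul, sum_const, card_product, card_univ, Fintype.card_fin,
    nsmul_eq_mul, mul_one, sum_product, x] at hcs
  refine hcs.trans ?_
  rw [← Real.sqrt_mul (by positivity)]
  calc _ ≤ √(n * #s * (#s * (Fintype.card m * Real.log (1 + n * #s / (Fintype.card m * lam)))
        / (lam * Real.log (1 + 1 / lam)))) := by
        push_cast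
        gcongr
        exact sum_quadForm_inv_designMatrix_le s v hlam hv
    _ = _ := by
        conv_rhs => enter [1]; rw [← Real.sqrt_sq (Nat.cast_nonneg (α := ℝ) #s)]
        rw [← Real.sqrt_mul (sq_nonneg _)]
        ring_nf

end DesignMatrix

theorem cumulative_scaled_regret_le_general
    {ι : Type*} (p : ℕ) (hp : 1 ≤ p)
    (lam : ℝ) (hlam : 0 < lam)
    (a : ℝ) (ha : 0 ≤ a)
    (γ : ℝ) (hγ0 : 0 < γ)
    (n K : ℕ)
    (Et : Fin n → Finset ι)
    (ηhat : Fin n → (Fin p → ℝ))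
    (ζ : Fin n → List ι → (Fin p → ℝ))
    (hζnorm : ∀ (t : Fin n) (A : List ι), A ≠ [] → A.Nodup → (∀ x ∈ A, x ∈ Et t) →
      Real.sqrt (ζ t A ⬝ᵥ ζ t A) ≤ 1)
    (A : Fin n → List ι)
    (hALen : ∀ t, (A t).length = K) (hANodup : ∀ t, (A t).Nodup)
    (hAMem : ∀ t, ∀ x ∈ A t, x ∈ Et t)
    (Φ : Fin n → Matrix (Fin p) (Fin p) ℝ)
    (hΦ : ∀ t, Φ t = lam • (1 : Matrix (Fin p) (Fin p) ℝ)
      + ∑ i ∈ Finset.univ.filter (fun i => i < t), ∑ k ∈ Finset.Icc 1 K,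
          vecMulVec (ζ i ((A i).take k)) (ζ i ((A i).take k)))
    (wbar U L : Fin n → List ι → ℝ)
    (hU : ∀ t (B : List ι), U t B
      = max 0 (min 1 (ηhat t ⬝ᵥ ζ t B + a * Real.sqrt (ζ t B ⬝ᵥ (Φ t)⁻¹ *ᵥ ζ t B))))
    (hL : ∀ t (B : List ι), L t B
      = max 0 (min 1 (ηhat t ⬝ᵥ ζ t B - a * Real.sqrt (ζ t B ⬝ᵥ (Φ t)⁻¹ *ᵥ ζ t B))))
    (f : Fin n → List ι → (List ι → ℝ) → ℝ)
    (hf : ∀ t (B : List ι) (g : List ι → ℝ),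
      f t B g = ∑ k ∈ Finset.Icc 1 B.length, g (B.take k))
    (good : ∀ t, ∀ B : List ι, B ≠ [] → B.Nodup → (∀ x ∈ B, x ∈ Et t) →
      L t B ≤ wbar t B ∧ wbar t B ≤ U t B)
    (hAApprox : ∀ t, ∀ B : List ι, B.length = K → B.Nodup → (∀ x ∈ B, x ∈ Et t) →
      γ * f t B (U t) ≤ f t (A t) (U t))
    (Astar : Fin n → List ι)
    (hAstarLen : ∀ t, (Astar t).length = K) (hAstarNodup : ∀ t, (Astar t).Nodup)
    (hAstarMem : ∀ t, ∀ x ∈ Astar t, x ∈ Et t) :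
    ∑ t, (f t (Astar t) (wbar t) - f t (A t) (wbar t) / γ)
      ≤ (2 * a * K / γ) * Real.sqrt ((n * p * Real.log (1 + n * K / (p * lam)))
          / (lam * Real.log (1 + 1 / lam))) := by
  have : Nonempty (Fin p) := ⟨⟨0, hp⟩⟩
  set v : Fin n → ℕ → Fin p → ℝ := fun t k => ζ t ((A t).take k)
  have hΦv : ∀ t, Φ t = designMatrix lam (Icc 1 K) v t := hΦ
  have hv : ∀ t, ∀ k ∈ Icc 1 K, v t k ⬝ᵥ v t k ≤ 1 := fun t k hk => by
    obtain ⟨hne, hnd, hmem⟩ :=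
      List.take_ne_nil_nodup_forall_mem (hANodup t) (hAMem t) (by rwa [hALen t])
    simpa using hζnorm t _ hne hnd hmem
  have hround : ∀ t, f t (Astar t) (wbar t) - f t (A t) (wbar t) / γ
      ≤ 2 * a / γ * ∑ k ∈ Icc 1 K, √(v t k ⬝ᵥ (designMatrix lam (Icc 1 K) v t)⁻¹ *ᵥ v t k) := by
    intro t
    have hoptimism : f t (Astar t) (wbar t) ≤ f t (Astar t) (U t) := by
      rw [hf, hf]
      exact sum_take_le_sum_take (hAstarNodup t) (hAstarMem t) fun C h₁ h₂ h₃ =>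
        (good t C h₁ h₂ h₃).2
    have hpessimism : f t (A t) (L t) ≤ f t (A t) (wbar t) := by
      rw [hf, hf]
      exact sum_take_le_sum_take (hANodup t) (hAMem t) fun C h₁ h₂ h₃ => (good t C h₁ h₂ h₃).1
    have hwidth : f t (A t) (U t) - f t (A t) (L t)
        ≤ 2 * a * ∑ k ∈ Icc 1 K, √(v t k ⬝ᵥ (designMatrix lam (Icc 1 K) v t)⁻¹ *ᵥ v t k) := by
      rw [hf, hf, hALen t, ← sum_sub_distrib, mul_sum]
      refine sum_le_sum fun k _ => ?_
      rw [hU, hL, hΦv, mul_assoc]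
      exact clamp_add_sub_clamp_sub_le _ (by positivity)
    calc _ ≤ (f t (A t) (U t) - f t (A t) (L t)) / γ := sub_div_le_of_le_of_mul_le hγ0 hoptimism
          (hAApprox t _ (hAstarLen t) (hAstarNodup t) (hAstarMem t)) hpessimism
      _ ≤ _ := by rw [div_mul_eq_mul_div, div_le_div_iff_of_pos_right hγ0]; exact hwidth
  calc _ ≤ ∑ t, 2 * a / γ * ∑ k ∈ Icc 1 K,
          √(v t k ⬝ᵥ (designMatrix lam (Icc 1 K) v t)⁻¹ *ᵥ v t k) := sum_le_sum fun t _ => hround t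
    _ ≤ 2 * a / γ * (K * √(n * p * Real.log (1 + n * K / (p * lam))
          / (lam * Real.log (1 + 1 / lam)))) := by
        rw [← mul_sum]
        gcongr
        simpa using sum_sqrt_quadForm_inv_designMatrix_le (Icc 1 K) v hlam hv
    _ = _ := by ring

/-- Cumulative regret bound.  For each step `t` of `n` steps, ordered lists
of distinct elements of the candidate set `Et t` are modelled as nonempty nodup `List`s
contained in `Et t`, with features `ζ t A ∈ ℝ^p` of Euclidean norm at most 1.  The chosen
list `A t` has length `K`, and `Φ t = λ • I + ∑_{i < t} ∑_{k=1}^K ζ_i(A_i^k) ζ_i(A_i^k)ᵀ`.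
With `w̄ t A = η*ᵀ ζ t A`, `U t A = clamp₀₁(η̂ₜᵀ ζ t A + α √(ζ t Aᵀ (Φ t)⁻¹ ζ t A))`,
`L t A = clamp₀₁(η̂ₜᵀ ζ t A - α √(ζ t Aᵀ (Φ t)⁻¹ ζ t A))` and
`f t A g = ∑_{k=1}^{|A|} g (A^k)`, assuming the good event `L t ≤ w̄ t ≤ U t` holds at
every step and `A t` is a `γ`-approximate maximizer of `f t (·) (U t)`, and `Astar t`
maximizes `f t (·) (w̄ t)` over `K`-permutations of `Et t`, we get
`∑_t [f t (Astar t) (w̄ t) - f t (A t) (w̄ t)/γ]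
  ≤ (2αK/γ) √(n p log(1 + nK/(pλ)) / (λ log(1 + 1/λ)))`. -/
theorem cumulative_scaled_regret_le
    {ι : Type*} (p : ℕ) (hp : 1 ≤ p)
    (lam : ℝ) (hlam : 0 < lam)
    (a : ℝ) (ha : 0 ≤ a)
    (γ : ℝ) (hγ0 : 0 < γ) (hγ1 : γ ≤ 1)
    (n K : ℕ) (hn : 0 < n) (hK : 0 < K)
    (ηstar : Fin p → ℝ)
    (Et : Fin n → Finset ι) (hEt : ∀ t, K ≤ (Et t).card)
    (ηhat : Fin n → (Fin p → ℝ))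
    (ζ : Fin n → List ι → (Fin p → ℝ))
    (hζnorm : ∀ (t : Fin n) (A : List ι), A ≠ [] → A.Nodup → (∀ x ∈ A, x ∈ Et t) →
      Real.sqrt (ζ t A ⬝ᵥ ζ t A) ≤ 1)
    (A : Fin n → List ι)
    (hALen : ∀ t, (A t).length = K) (hANodup : ∀ t, (A t).Nodup)
    (hAMem : ∀ t, ∀ x ∈ A t, x ∈ Et t)
    (Φ : Fin n → Matrix (Fin p) (Fin p) ℝ)
    (hΦ : ∀ t, Φ t = lam • (1 : Matrix (Fin p) (Fin p) ℝ)
      + ∑ i ∈ Finset.univ.filter (fun i => i < t), ∑ k ∈ Finset.Icc 1 K,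
          vecMulVec (ζ i ((A i).take k)) (ζ i ((A i).take k)))
    (wbar U L : Fin n → List ι → ℝ)
    (hw : ∀ t (B : List ι), wbar t B = ηstar ⬝ᵥ ζ t B)
    (hU : ∀ t (B : List ι), U t B
      = max 0 (min 1 (ηhat t ⬝ᵥ ζ t B + a * Real.sqrt (ζ t B ⬝ᵥ (Φ t)⁻¹ *ᵥ ζ t B))))
    (hL : ∀ t (B : List ι), L t B
      = max 0 (min 1 (ηhat t ⬝ᵥ ζ t B - a * Real.sqrt (ζ t B ⬝ᵥ (Φ t)⁻¹ *ᵥ ζ t B))))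
    (f : Fin n → List ι → (List ι → ℝ) → ℝ)
    (hf : ∀ t (B : List ι) (g : List ι → ℝ),
      f t B g = ∑ k ∈ Finset.Icc 1 B.length, g (B.take k))
    (good : ∀ t, ∀ B : List ι, B ≠ [] → B.Nodup → (∀ x ∈ B, x ∈ Et t) →
      L t B ≤ wbar t B ∧ wbar t B ≤ U t B)
    (hAApprox : ∀ t, ∀ B : List ι, B.length = K → B.Nodup → (∀ x ∈ B, x ∈ Et t) →
      γ * f t B (U t) ≤ f t (A t) (U t))
    (Astar : Fin n → List ι)
    (hAstarLen : ∀ t, (Astar t).length = K) (hAstarNodup : ∀ t, (Astar t).Nodup)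
    (hAstarMem : ∀ t, ∀ x ∈ Astar t, x ∈ Et t)
    (hAstarOpt : ∀ t, ∀ B : List ι, B.length = K → B.Nodup → (∀ x ∈ B, x ∈ Et t) →
      f t B (wbar t) ≤ f t (Astar t) (wbar t)) :
    ∑ t, (f t (Astar t) (wbar t) - f t (A t) (wbar t) / γ)
      ≤ (2 * a * K / γ) * Real.sqrt ((n * p * Real.log (1 + n * K / (p * lam)))
          / (lam * Real.log (1 + 1 / lam))) :=
  cumulative_scaled_regret_le_general p hp lam hlam a ha γ hγ0 n K Et ηhat ζ hζnorm A hALen hANodup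
    hAMem Φ hΦ wbar U L hU hL f hf good hAApprox Astar hAstarLen hAstarNodup hAstarMem
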